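/- arXiv:1908.00127 — 7 statements merged into one kernel-verified Lean document; each statement's English description precedes it below -/
import Mathlib

section
/- Let (a_n), (b_n), (c_n), (d_n) be the integer sequences with a_1 = 3, b_1 = 4, c_1 = 3, d_1 = 4 and, for n ≥ 2, a_n = 2a_{n−1} + b_{n−1} + 2d_{n−1}, b_n = 2a_{n−1} + 2b_{n−1} + 2c_{n−1}, c_n = 2a_{n−1} + b_{n−1} + d_{n−1}, d_n = 2a_{n−1} + 2b_{n−1} + c_{n−1}. Then for every n ≥ 1: d_n ≤ b_n, c_n ≤ d_n, b_n ≤ 2c_n, and a_n ≤ b_n. -/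
/-!
The four inequalities, together with `0 ≤ a`, cut out a cone that the linear recurrence maps into
itself, and the initial vector `(3, 4, 3, 4)` lies in it; induction on `n` finishes the proof.
-/

def H73Invariant (a b c d : ℤ) : Prop :=
  0 ≤ a ∧ d ≤ b ∧ c ≤ d ∧ b ≤ 2 * c ∧ a ≤ b

theorem H73Invariant.step {a b c d : ℤ} (h : H73Invariant a b c d) :
    H73Invariant (2 * a + b + 2 * d) (2 * a + 2 * b + 2 * c) (2 * a + b + d) (2 * a + 2 * b + c) := by
  obtain ⟨ha, hdb, hcd, hbc, hab⟩ := h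
  -- `c ≤ d ≤ b ≤ 2 * c` forces `0 ≤ c`
  have hc : 0 ≤ c := by linarith
  refine ⟨?_, ?_, ?_, ?_, ?_⟩ <;> linarith

/-- For the four integer sequences arising from counting restricted SAWs on `H(7,3)`,
one has `d_n ≤ b_n`, `c_n ≤ d_n`, `b_n ≤ 2 c_n` and `a_n ≤ b_n` for every `n ≥ 1`. -/
theorem h73_sequence_inequalities
    (a b c d : ℕ → ℤ)
    (ha1 : a 1 = 3) (hb1 : b 1 = 4) (hc1 : c 1 = 3) (hd1 : d 1 = 4)
    (ha : ∀ n : ℕ, 2 ≤ n → a n = 2 * a (n - 1) + b (n - 1) + 2 * d (n - 1))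
    (hb : ∀ n : ℕ, 2 ≤ n → b n = 2 * a (n - 1) + 2 * b (n - 1) + 2 * c (n - 1))
    (hc : ∀ n : ℕ, 2 ≤ n → c n = 2 * a (n - 1) + b (n - 1) + d (n - 1))
    (hd : ∀ n : ℕ, 2 ≤ n → d n = 2 * a (n - 1) + 2 * b (n - 1) + c (n - 1)) :
    ∀ n : ℕ, 1 ≤ n → d n ≤ b n ∧ c n ≤ d n ∧ b n ≤ 2 * c n ∧ a n ≤ b n := by
  have invariant : ∀ n : ℕ, 1 ≤ n → H73Invariant (a n) (b n) (c n) (d n) := by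
    intro n hn
    induction n, hn using Nat.le_induction with
    | base =>
      rw [ha1, hb1, hc1, hd1]
      norm_num [H73Invariant]
    | succ m _ ih =>
      have hm : 2 ≤ m + 1 := by omega
      rw [ha _ hm, hb _ hm, hc _ hm, hd _ hm, Nat.add_sub_cancel]
      exact ih.step
  intro n hn
  exact (invariant n hn).2
end

section
/- Let (a_n), (b_n), (c_n), (d_n) be the integer sequences with a_1 = 3, b_1 = 4, c_1 = 3, d_1 = 4 and, for n ≥ 2, a_n = 2a_{n−1} + b_{n−1} + 2d_{n−1}, b_n = 2a_{n−1} + 2b_{n−1} + 2c_{n−1}, c_n = 2a_{n−1} + b_{n−1} + d_{n−1}, d_n = 2a_{n−1} + 2b_{n−1} + c_{n−1}. Then the sequence a_n^{1/n} converges to a real number λ which is an eigenvalue of the real 4×4 matrix M = [[2,1,0,2],[2,2,2,0],[2,1,0,1],[2,2,1,0]], and λ > 5. -/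
/-!
The growth rate is the Perron root of `M`: the characteristic polynomial
`x⁴ - 4x³ - 5x² - 4x - 2` has a root `λ ∈ (5, 6)`, and for it `M` has an eigenvector `w`
with positive entries. The initial vector `(3, 4, 3, 4)` lies between two positive multiples
of `w`; since `M` has nonnegative entries, applying it `n` times keeps `(a, b, c, d)_{n+1}`
between the same multiples of `λⁿ w`, so `a_n^{1/n} → λ`.
-/

open Filter Topology Matrix

theorem tendsto_const_rpow_one_div_natCast {c : ℝ} (hc : 0 < c) :
    Tendsto (fun n : ℕ => c ^ (1 / (n : ℝ))) atTop (𝓝 1) := by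
  simpa [Function.comp_def] using ((Real.continuous_const_rpow hc.ne').tendsto 0).comp
    tendsto_one_div_atTop_nhds_zero_nat

theorem tendsto_mul_pow_rpow_one_div_natCast {c r : ℝ} (hc : 0 < c) (hr : 0 ≤ r) :
    Tendsto (fun n : ℕ => (c * r ^ n) ^ (1 / (n : ℝ))) atTop (𝓝 r) := by
  have h := (tendsto_const_rpow_one_div_natCast hc).mul_const r
  rw [one_mul] at h
  refine h.congr' ?_
  filter_upwards [eventually_ne_atTop 0] with n hn
  rw [Real.mul_rpow hc.le (by positivity), one_div, Real.pow_rpow_inv_natCast hr hn]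

theorem tendsto_rpow_one_div_natCast_of_le_of_le {x : ℕ → ℝ} {c C r : ℝ} (hc : 0 < c)
    (hC : 0 < C) (hr : 0 ≤ r) (hlow : ∀ᶠ n in atTop, c * r ^ n ≤ x n)
    (hup : ∀ᶠ n in atTop, x n ≤ C * r ^ n) :
    Tendsto (fun n : ℕ => x n ^ (1 / (n : ℝ))) atTop (𝓝 r) :=
  tendsto_of_tendsto_of_tendsto_of_le_of_le' (tendsto_mul_pow_rpow_one_div_natCast hc hr)
    (tendsto_mul_pow_rpow_one_div_natCast hC hr)
    (hlow.mono fun _ h => Real.rpow_le_rpow (by positivity) h (by positivity))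
    ((hlow.and hup).mono fun _ h =>
      Real.rpow_le_rpow ((by positivity : (0 : ℝ) ≤ c * r ^ _).trans h.1) h.2 (by positivity))

theorem tendsto_rpow_one_div_natCast_of_le_succ_le {x : ℕ → ℝ} {c C r : ℝ} (hc : 0 < c)
    (hC : 0 < C) (hr : 0 < r) (hx : ∀ n, c * r ^ n ≤ x (n + 1) ∧ x (n + 1) ≤ C * r ^ n) :
    Tendsto (fun n : ℕ => x n ^ (1 / (n : ℝ))) atTop (𝓝 r) := by
  have hshift (k : ℝ) (n : ℕ) : k / r * r ^ (n + 1) = k * r ^ n := by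
    rw [pow_succ]
    field_simp
  have hx' : ∀ᶠ n in atTop, c / r * r ^ n ≤ x n ∧ x n ≤ C / r * r ^ n := by
    filter_upwards [eventually_ne_atTop 0] with n hn
    obtain ⟨m, rfl⟩ := Nat.exists_eq_add_one_of_ne_zero hn
    simpa only [hshift] using hx m
  exact tendsto_rpow_one_div_natCast_of_le_of_le (by positivity) (by positivity) hr.le
    (hx'.mono fun _ h => h.1) (hx'.mono fun _ h => h.2)

section NonnegMatrix

variable {ι R : Type*} [Fintype ι] [CommSemiring R] [PartialOrder R] [IsOrderedRing R]
  {M : Matrix ι ι R}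

theorem Matrix.mulVec_mono_of_nonneg (hM : ∀ i j, 0 ≤ M i j) {v w : ι → R} (h : v ≤ w) :
    M *ᵥ v ≤ M *ᵥ w := fun i =>
  Finset.sum_le_sum fun j _ => mul_le_mul_of_nonneg_left (h j) (hM i j)

variable (hM : ∀ i j, 0 ≤ M i j) {w : ι → R} {r : R} (hw : M *ᵥ w = r • w)
  {v : ℕ → ι → R} (hv : ∀ n, v (n + 1) = M *ᵥ v n)
include hM hw hv

theorem Matrix.mul_pow_smul_le_of_succ_eq_mulVec {c : R} (h0 : c • w ≤ v 0) (n : ℕ) :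
    (c * r ^ n) • w ≤ v n := by
  induction n with
  | zero => simpa using h0
  | succ n ih =>
    calc (c * r ^ (n + 1)) • w = M *ᵥ ((c * r ^ n) • w) := by
          rw [mulVec_smul, hw, smul_smul, pow_succ, mul_assoc]
      _ ≤ M *ᵥ v n := M.mulVec_mono_of_nonneg hM ih
      _ = v (n + 1) := (hv n).symm

theorem Matrix.le_mul_pow_smul_of_succ_eq_mulVec {C : R} (h0 : v 0 ≤ C • w) (n : ℕ) :
    v n ≤ (C * r ^ n) • w := by
  induction n with
  | zero => simpa using h0
  | succ n ih =>
    calc v (n + 1) = M *ᵥ v n := hv n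
      _ ≤ M *ᵥ ((C * r ^ n) • w) := M.mulVec_mono_of_nonneg hM ih
      _ = (C * r ^ (n + 1)) • w := by
          rw [mulVec_smul, hw, smul_smul, pow_succ, mul_assoc]

end NonnegMatrix

section PositiveVectors

variable {ι K : Type*} [Finite ι] [Nonempty ι] [Field K] [LinearOrder K] [IsStrictOrderedRing K]
  {v w : ι → K}

theorem exists_pos_smul_le (hv : ∀ i, 0 < v i) (hw : ∀ i, 0 < w i) :
    ∃ c : K, 0 < c ∧ c • w ≤ v := by
  obtain ⟨i₀, hi₀⟩ := Finite.exists_min fun i => v i / w i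
  exact ⟨v i₀ / w i₀, div_pos (hv i₀) (hw i₀), fun i => (le_div_iff₀ (hw i)).1 (hi₀ i)⟩

theorem exists_pos_le_smul (hv : ∀ i, 0 < v i) (hw : ∀ i, 0 < w i) :
    ∃ C : K, 0 < C ∧ v ≤ C • w := by
  obtain ⟨i₀, hi₀⟩ := Finite.exists_max fun i => v i / w i
  exact ⟨v i₀ / w i₀, div_pos (hv i₀) (hw i₀), fun i => (div_le_iff₀ (hw i)).1 (hi₀ i)⟩

end PositiveVectors

def transferMatrix : Matrix (Fin 4) (Fin 4) ℝ :=
  !![2, 1, 0, 2; 2, 2, 2, 0; 2, 1, 0, 1; 2, 2, 1, 0]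

theorem transferMatrix_nonneg (i j : Fin 4) : 0 ≤ transferMatrix i j := by
  fin_cases i <;> fin_cases j <;> norm_num [transferMatrix]

theorem transferMatrix_charpoly_eval (x : ℝ) :
    transferMatrix.charpoly.eval x = x ^ 4 - 4 * x ^ 3 - 5 * x ^ 2 - 4 * x - 2 := by
  rw [eval_charpoly, det_succ_row_zero, Fin.sum_univ_four]
  simp [det_fin_three, transferMatrix, Fin.succAbove]
  ring

theorem exists_transferMatrix_charpoly_root_mem_Ioo :
    ∃ x ∈ Set.Ioo (5 : ℝ) 6, transferMatrix.charpoly.IsRoot x := by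
  simp only [Polynomial.IsRoot, transferMatrix_charpoly_eval]
  exact intermediate_value_Ioo (by norm_num) (by fun_prop) (by norm_num)

/- The first three rows of `(transferMatrix - x) w = 0` determine `w`; the fourth row is then
the characteristic equation. -/
def perronVector (x : ℝ) : Fin 4 → ℝ :=
  ![2 * x ^ 2 - 4 * x - 2, 6 * x + 4, x ^ 2 - 2, x ^ 3 - 4 * x ^ 2]

theorem perronVector_pos {x : ℝ} (hx : 4 < x) (i : Fin 4) : 0 < perronVector x i := by
  have hx2 : 0 < x ^ 2 := by positivity
  fin_cases i <;>
    simp only [perronVector, Fin.isValue, Fin.zero_eta, Fin.mk_one, Fin.reduceFinMk, cons_val] <;>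
    nlinarith [mul_pos hx2 (sub_pos.2 hx)]

theorem transferMatrix_mulVec_perronVector {x : ℝ} (hx : transferMatrix.charpoly.IsRoot x) :
    transferMatrix *ᵥ perronVector x = x • perronVector x := by
  rw [Polynomial.IsRoot, transferMatrix_charpoly_eval] at hx
  ext i
  fin_cases i <;>
    simp only [mulVec, dotProduct, Fin.sum_univ_four, transferMatrix, perronVector, of_apply,
      Pi.smul_apply, smul_eq_mul, Fin.isValue, Fin.zero_eta, Fin.mk_one, Fin.reduceFinMk, cons_val]
  · ring
  · ring
  · ring
  · linear_combination -hx

/-- For the sequences arising from counting restricted SAWs on `H(7,3)`, the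
sequence `a_n^{1/n}` converges to an eigenvalue `λ > 5` of the transfer matrix. -/
theorem h73_growth_rate
    (a b c d : ℕ → ℤ)
    (ha1 : a 1 = 3) (hb1 : b 1 = 4) (hc1 : c 1 = 3) (hd1 : d 1 = 4)
    (ha : ∀ n : ℕ, 2 ≤ n → a n = 2 * a (n - 1) + b (n - 1) + 2 * d (n - 1))
    (hb : ∀ n : ℕ, 2 ≤ n → b n = 2 * a (n - 1) + 2 * b (n - 1) + 2 * c (n - 1))
    (hc : ∀ n : ℕ, 2 ≤ n → c n = 2 * a (n - 1) + b (n - 1) + d (n - 1))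
    (hd : ∀ n : ℕ, 2 ≤ n → d n = 2 * a (n - 1) + 2 * b (n - 1) + c (n - 1)) :
    ∃ lam : ℝ,
      Tendsto (fun n : ℕ => (a n : ℝ) ^ (1 / (n : ℝ))) atTop (nhds lam) ∧
      (Matrix.charpoly (!![2, 1, 0, 2; 2, 2, 2, 0; 2, 1, 0, 1; 2, 2, 1, 0] :
          Matrix (Fin 4) (Fin 4) ℝ)).IsRoot lam ∧
      5 < lam := by
  obtain ⟨lam, ⟨hlam, -⟩, hroot⟩ := exists_transferMatrix_charpoly_root_mem_Ioo
  refine ⟨lam, ?_, hroot, hlam⟩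
  let v : ℕ → Fin 4 → ℝ := fun n => ![a (n + 1), b (n + 1), c (n + 1), d (n + 1)]
  have hv : ∀ n, v (n + 1) = transferMatrix *ᵥ v n := fun n => by
    ext i
    fin_cases i <;> simp [v, transferMatrix, mulVec, dotProduct, Fin.sum_univ_four,
      ha (n + 2), hb (n + 2), hc (n + 2), hd (n + 2)]
  have hv0 : ∀ i, 0 < v 0 i := fun i => by fin_cases i <;> simp [v, ha1, hb1, hc1, hd1]
  have hw := perronVector_pos (by linarith : 4 < lam)
  have hMw := transferMatrix_mulVec_perronVector hroot
  obtain ⟨c₀, hc₀, hlow⟩ := exists_pos_smul_le hv0 hw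
  obtain ⟨C₀, hC₀, hup⟩ := exists_pos_le_smul hv0 hw
  refine tendsto_rpow_one_div_natCast_of_le_succ_le (mul_pos hc₀ (hw 0)) (mul_pos hC₀ (hw 0))
    (by linarith) fun n => ⟨?_, ?_⟩
  · have := mul_pow_smul_le_of_succ_eq_mulVec transferMatrix_nonneg hMw hv hlow n 0
    simp only [v, Pi.smul_apply, smul_eq_mul, cons_val_zero] at this
    linarith
  · have := le_mul_pow_smul_of_succ_eq_mulVec transferMatrix_nonneg hMw hv hup n 0
    simp only [v, Pi.smul_apply, smul_eq_mul, cons_val_zero] at this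
    linarith
end

section
/- Let (a_n), (b_n), (c_n) be the integer sequences with a_1 = 1, b_1 = 1, c_1 = 2 and, for n ≥ 2, a_n = a_{n−1} + 2c_{n−1}, b_n = a_{n−1} + c_{n−1}, c_n = 2a_{n−1} + b_{n−1}. Then the sequence a_n^{1/n} converges to a real number λ which is an eigenvalue of the real 3×3 matrix M = [[1,0,2],[1,0,1],[2,1,0]], and λ > 2.7. -/
/-!
The vector `v = (λ² - 1, 2, 2λ)` is a left eigenvector of `M` for the root `λ ∈ (2.7, 3)` of the
characteristic polynomial `x³ - x² - 5x - 1`, so `v · (aₙ, bₙ, cₙ) = λⁿ (λ² - 1)`. All entries are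
positive, `bₙ ≤ aₙ` and `cₙ ≤ 3aₙ`, hence this invariant pinches `aₙ` between two constant multiples
of `λⁿ`, and the `n`-th roots converge to `λ`.
-/

open Filter Topology

theorem tendsto_const_mul_pow_rpow_one_div {K r : ℝ} (hK : 0 < K) (hr : 0 ≤ r) :
    Tendsto (fun n : ℕ => (K * r ^ n) ^ (1 / (n : ℝ))) atTop (𝓝 r) := by
  have hroot : Tendsto (fun n : ℕ => K ^ (1 / (n : ℝ))) atTop (𝓝 1) := by
    simpa [Function.comp_def] using (Real.continuousAt_const_rpow hK.ne').tendsto.comp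
      (tendsto_one_div_atTop_nhds_zero_nat (𝕜 := ℝ))
  refine (by simpa using hroot.mul_const r : Tendsto _ _ (𝓝 r)).congr' ?_
  filter_upwards [eventually_ne_atTop 0] with n hn
  rw [Real.mul_rpow hK.le (by positivity), one_div, Real.pow_rpow_inv_natCast hr hn]

theorem tendsto_rpow_one_div_of_const_mul_pow_le {x : ℕ → ℝ} {r C D : ℝ} (hr : 0 ≤ r)
    (hC : 0 < C) (hD : 0 < D) (hlow : ∀ᶠ n in atTop, C * r ^ n ≤ x n)
    (hup : ∀ᶠ n in atTop, x n ≤ D * r ^ n) :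
    Tendsto (fun n : ℕ => x n ^ (1 / (n : ℝ))) atTop (𝓝 r) := by
  refine tendsto_of_tendsto_of_tendsto_of_le_of_le'
    (tendsto_const_mul_pow_rpow_one_div hC hr) (tendsto_const_mul_pow_rpow_one_div hD hr) ?_ ?_
  · filter_upwards [hlow] with n hn
    exact Real.rpow_le_rpow (by positivity) hn (by positivity)
  · filter_upwards [hlow, hup] with n hn hn'
    exact Real.rpow_le_rpow ((by positivity : 0 ≤ C * r ^ n).trans hn) hn' (by positivity)

theorem charpoly_h45_eval (x : ℝ) :
    (Matrix.charpoly (!![1, 0, 2; 1, 0, 1; 2, 1, 0] : Matrix (Fin 3) (Fin 3) ℝ)).eval x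
      = x ^ 3 - x ^ 2 - 5 * x - 1 := by
  rw [Matrix.charpoly, Matrix.det_fin_three]
  simp
  ring

theorem exists_cubic_root_mem_Ioo :
    ∃ lam ∈ Set.Ioo (2.7 : ℝ) 3, lam ^ 3 - lam ^ 2 - 5 * lam - 1 = 0 :=
  intermediate_value_Ioo (by norm_num) (by fun_prop) (by norm_num)

structure H45Counts (a b c : ℕ → ℤ) : Prop where
  a_one : a 1 = 1
  b_one : b 1 = 1
  c_one : c 1 = 2
  a_succ : ∀ n, 1 ≤ n → a (n + 1) = a n + 2 * c n
  b_succ : ∀ n, 1 ≤ n → b (n + 1) = a n + c n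
  c_succ : ∀ n, 1 ≤ n → c (n + 1) = 2 * a n + b n

namespace H45Counts

variable {a b c : ℕ → ℤ}

theorem pos (h : H45Counts a b c) {n : ℕ} (hn : 1 ≤ n) : 0 < a n ∧ 0 < b n ∧ 0 < c n := by
  induction n, hn using Nat.le_induction with
  | base => simp [h.a_one, h.b_one, h.c_one]
  | succ n hn ih =>
    obtain ⟨ha, hb, hc⟩ := ih
    rw [h.a_succ n hn, h.b_succ n hn, h.c_succ n hn]
    omega

theorem a_le_a_succ (h : H45Counts a b c) {n : ℕ} (hn : 1 ≤ n) : a n ≤ a (n + 1) := by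
  have := (h.pos hn).2.2
  rw [h.a_succ n hn]
  omega

theorem b_le_a (h : H45Counts a b c) {n : ℕ} (hn : 1 ≤ n) : b n ≤ a n := by
  induction n, hn using Nat.le_induction with
  | base => simp [h.a_one, h.b_one]
  | succ n hn _ =>
    have := (h.pos hn).2.2
    rw [h.a_succ n hn, h.b_succ n hn]
    omega

theorem c_le_three_mul_a (h : H45Counts a b c) {n : ℕ} (hn : 1 ≤ n) : c n ≤ 3 * a n := by
  induction n, hn using Nat.le_induction with
  | base => simp [h.a_one, h.c_one]
  | succ n hn _ =>
    have := h.b_le_a hn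
    have := h.a_le_a_succ hn
    rw [h.c_succ n hn]
    omega

section Eigenvalue

variable {lam : ℝ}

theorem eigen_combination_eq (h : H45Counts a b c) (hlam : lam ^ 3 = lam ^ 2 + 5 * lam + 1)
    {n : ℕ} (hn : 1 ≤ n) :
    (lam ^ 2 - 1) * a n + 2 * b n + 2 * lam * c n = lam ^ n * (lam ^ 2 - 1) := by
  induction n, hn using Nat.le_induction with
  | base =>
    rw [h.a_one, h.b_one, h.c_one]
    push_cast
    linear_combination -hlam
  | succ n hn ih =>
    rw [h.a_succ n hn, h.b_succ n hn, h.c_succ n hn]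
    push_cast
    linear_combination lam * ih - (a n : ℝ) * hlam

theorem a_le_pow (h : H45Counts a b c) (hlam : lam ^ 3 = lam ^ 2 + 5 * lam + 1) (hlam1 : 1 < lam)
    {n : ℕ} (hn : 1 ≤ n) : (a n : ℝ) ≤ lam ^ n := by
  have heq := h.eigen_combination_eq hlam hn
  obtain ⟨-, hb, hc⟩ := h.pos hn
  have hb : (0 : ℝ) < b n := by exact_mod_cast hb
  have hc : (0 : ℝ) < c n := by exact_mod_cast hc
  have hsq : 0 < lam ^ 2 - 1 := by nlinarith
  refine le_of_mul_le_mul_left ?_ hsq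
  nlinarith

theorem const_mul_pow_le_a (h : H45Counts a b c) (hlam : lam ^ 3 = lam ^ 2 + 5 * lam + 1)
    (hlam0 : 0 ≤ lam) {n : ℕ} (hn : 1 ≤ n) :
    (lam ^ 2 - 1) / (lam ^ 2 + 6 * lam + 1) * lam ^ n ≤ a n := by
  have heq := h.eigen_combination_eq hlam hn
  have hb : (b n : ℝ) ≤ a n := by exact_mod_cast h.b_le_a hn
  have hc : (c n : ℝ) ≤ 3 * a n := by exact_mod_cast h.c_le_three_mul_a hn
  rw [div_mul_eq_mul_div, div_le_iff₀ (by positivity)]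
  nlinarith

end Eigenvalue

end H45Counts

/-- For the sequences arising from counting restricted SAWs on `H(4,5)`, the
sequence `a_n^{1/n}` converges to an eigenvalue `λ > 2.7` of the transfer matrix. -/
theorem h45_growth_rate
    (a b c : ℕ → ℤ)
    (ha1 : a 1 = 1) (hb1 : b 1 = 1) (hc1 : c 1 = 2)
    (ha : ∀ n : ℕ, 2 ≤ n → a n = a (n - 1) + 2 * c (n - 1))
    (hb : ∀ n : ℕ, 2 ≤ n → b n = a (n - 1) + c (n - 1))
    (hc : ∀ n : ℕ, 2 ≤ n → c n = 2 * a (n - 1) + b (n - 1)) :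
    ∃ lam : ℝ,
      Tendsto (fun n : ℕ => (a n : ℝ) ^ (1 / (n : ℝ))) atTop (nhds lam) ∧
      (Matrix.charpoly (!![1, 0, 2; 1, 0, 1; 2, 1, 0] :
          Matrix (Fin 3) (Fin 3) ℝ)).IsRoot lam ∧
      2.7 < lam := by
  have h : H45Counts a b c :=
    ⟨ha1, hb1, hc1, fun n _ => by simpa using ha (n + 1) (by omega),
      fun n _ => by simpa using hb (n + 1) (by omega),
      fun n _ => by simpa using hc (n + 1) (by omega)⟩
  obtain ⟨lam, ⟨hlam_gt, -⟩, hroot⟩ := exists_cubic_root_mem_Ioo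
  have hlam : lam ^ 3 = lam ^ 2 + 5 * lam + 1 := by linarith
  have hC : 0 < (lam ^ 2 - 1) / (lam ^ 2 + 6 * lam + 1) := by
    apply div_pos <;> nlinarith
  refine ⟨lam, ?_, by rw [Polynomial.IsRoot, charpoly_h45_eval, hroot], hlam_gt⟩
  refine tendsto_rpow_one_div_of_const_mul_pow_le (by linarith) hC one_pos ?_ ?_
  · filter_upwards [eventually_ge_atTop 1] with n hn
    exact h.const_mul_pow_le_a hlam (by linarith) hn
  · filter_upwards [eventually_ge_atTop 1] with n hn
    rw [one_mul]
    exact h.a_le_pow hlam (by linarith) hn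
end

section
/- The function r ↦ (r+1)/r^{r/(r+1)} is decreasing on the interval [1, ∞): for all real numbers 1 ≤ r ≤ s, (s+1)/s^{s/(s+1)} ≤ (r+1)/r^{r/(r+1)}. -/
/-! Taking logarithms, the claim is that `g r = log (r + 1) - r / (r + 1) * log r` is antitone on
`[1, ∞)`; this holds because `g' r = -log r / (r + 1) ^ 2 ≤ 0` there. -/

open Real Set

noncomputable def logGrowthBound (r : ℝ) : ℝ := log (r + 1) - r / (r + 1) * log r

theorem hasDerivAt_logGrowthBound {x : ℝ} (hx : 0 < x) :
    HasDerivAt logGrowthBound (-(log x / (x + 1) ^ 2)) x := by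
  have hx1 : x + 1 ≠ 0 := by positivity
  have hlog : HasDerivAt (fun r : ℝ => log (r + 1)) (1 / (x + 1)) x := by
    simpa using ((hasDerivAt_id x).add_const 1).log hx1
  have hfrac : HasDerivAt (fun r : ℝ => r / (r + 1)) ((1 * (x + 1) - x * 1) / (x + 1) ^ 2) x :=
    (hasDerivAt_id x).div ((hasDerivAt_id x).add_const 1) hx1
  refine (hlog.sub (hfrac.mul (hasDerivAt_log hx.ne'))).congr_deriv ?_
  field_simp
  ring

theorem antitoneOn_logGrowthBound : AntitoneOn logGrowthBound (Ici 1) := by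
  have hderiv : ∀ x ∈ Ici (1 : ℝ), HasDerivAt logGrowthBound (-(log x / (x + 1) ^ 2)) x :=
    fun x hx => hasDerivAt_logGrowthBound (zero_lt_one.trans_le hx)
  refine antitoneOn_of_hasDerivWithinAt_nonpos (convex_Ici 1)
    (fun x hx => (hderiv x hx).continuousAt.continuousWithinAt)
    (fun x hx => (hderiv x (interior_subset hx)).hasDerivWithinAt) fun x hx => ?_
  have : 0 ≤ log x := log_nonneg (interior_subset (s := Ici (1 : ℝ)) hx)
  exact neg_nonpos.mpr (by positivity)

theorem add_one_div_rpow_eq_exp_logGrowthBound {r : ℝ} (hr : 0 < r) :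
    (r + 1) / r ^ (r / (r + 1)) = exp (logGrowthBound r) := by
  rw [logGrowthBound, exp_sub, exp_log (by positivity), rpow_def_of_pos hr, mul_comm]

/-- The function `r ↦ (r+1)/r^{r/(r+1)}` is decreasing on `[1, ∞)`. -/
theorem surface_volume_bound_antitone :
    ∀ r s : ℝ, 1 ≤ r → r ≤ s →
      (s + 1) / s ^ (s / (s + 1)) ≤ (r + 1) / r ^ (r / (r + 1)) := by
  intro r s hr hrs
  have hs : 1 ≤ s := hr.trans hrs
  rw [add_one_div_rpow_eq_exp_logGrowthBound (zero_lt_one.trans_le hr),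
    add_one_div_rpow_eq_exp_logGrowthBound (zero_lt_one.trans_le hs)]
  exact exp_le_exp.mpr (antitoneOn_logGrowthBound hr hs hrs)
end

section
/- For every integer k ≥ 7 and every real number r > 0, min{ (r+1)/r^{r/(r+1)}, ((r+1)^{r+1}/r^r)^{1/(k−4)} } ≤ (k−4)/(k−5)^{(k−5)/(k−4)}, with equality when r = k−5. -/
/-!
Write `c = k - 5`, `F r = (r+1)/r^{r/(r+1)}` and `G r = (r+1)^{r+1}/r^r = F r ^ (r+1)`.
Since `log F r` is the binary entropy of `1/(r+1)`, `F` decreases on `[1, ∞)`; since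
`log G r = h (r+1) - h r` for the convex function `h x = x log x`, `G` increases. The two
branches `F r` and `G r ^ (1/(c+1))` of the minimum meet at `r = c`, with common value the
right-hand side, so for `r ≤ c` the second branch is bounded by it and for `r ≥ c` the first.
-/

open Real Set

theorem ConvexOn.sub_le_sub_of_le {𝕜 : Type*} [Field 𝕜] [LinearOrder 𝕜] [IsStrictOrderedRing 𝕜]
    {s : Set 𝕜} {f : 𝕜 → 𝕜} (hf : ConvexOn 𝕜 s f) {x y h : 𝕜} (hx : x ∈ s) (hyh : y + h ∈ s)
    (hh : 0 < h) (hxy : x ≤ y) : f (x + h) - f x ≤ f (y + h) - f y := by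
  have hxh : x + h ∈ s := hf.1.ordConnected.out hx hyh ⟨by linarith, by linarith⟩
  have hy : y ∈ s := hf.1.ordConnected.out hx hyh ⟨hxy, by linarith⟩
  have left := hf.secant_mono hx hxh hyh (by linarith) (by linarith) (by linarith)
  have right := hf.secant_mono hyh hx hy (by linarith) (by linarith) hxy
  rw [← neg_div_neg_eq (f x - _), neg_sub, neg_sub] at right
  simp only [add_sub_cancel_left, sub_add_cancel_left] at left right
  rw [div_neg, ← neg_div, neg_sub] at right
  exact (div_le_div_iff_of_pos_right hh).1 (left.trans right)

theorem monotoneOn_add_one_mul_log_sub_mul_log :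
    MonotoneOn (fun x : ℝ ↦ (x + 1) * log (x + 1) - x * log x) (Ici 0) := fun x hx y _ hxy ↦
  convexOn_mul_log.sub_le_sub_of_le hx (mem_Ici.2 (by linarith [mem_Ici.1 hx])) one_pos hxy

theorem monotoneOn_add_one_rpow_div_rpow :
    MonotoneOn (fun r : ℝ ↦ (r + 1) ^ (r + 1) / r ^ r) (Ioi 0) := by
  have h_exp (x : ℝ) (hx : 0 < x) :
      (x + 1) ^ (x + 1) / x ^ x = exp ((x + 1) * log (x + 1) - x * log x) := by
    rw [rpow_def_of_pos hx, rpow_def_of_pos (by positivity), ← exp_sub, mul_comm x,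
      mul_comm (x + 1)]
  intro r (hr : 0 < r) s (hs : 0 < s) hrs
  simp only [h_exp r hr, h_exp s hs, exp_le_exp]
  exact monotoneOn_add_one_mul_log_sub_mul_log hr.le hs.le hrs

theorem add_one_div_rpow_eq_exp_binEntropy {r : ℝ} (hr : 0 < r) :
    (r + 1) / r ^ (r / (r + 1)) = exp (binEntropy (r + 1)⁻¹) := by
  have h_compl : 1 - (r + 1)⁻¹ = r / (r + 1) := by field_simp; ring
  rw [← exp_log (by positivity : 0 < (r + 1) / r ^ (r / (r + 1))),
    log_div (by positivity) (by positivity), log_rpow hr, binEntropy, inv_inv, h_compl, inv_div,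
    log_div (by positivity) hr.ne']
  congr 1
  field_simp
  ring

theorem antitoneOn_add_one_div_rpow :
    AntitoneOn (fun r : ℝ ↦ (r + 1) / r ^ (r / (r + 1))) (Ici 1) := by
  intro r (hr : 1 ≤ r) s (hs : 1 ≤ s) hrs
  simp only [add_one_div_rpow_eq_exp_binEntropy (by linarith : (0 : ℝ) < r),
    add_one_div_rpow_eq_exp_binEntropy (by linarith : (0 : ℝ) < s), exp_le_exp]
  refine binEntropy_strictMonoOn.monotoneOn ⟨by positivity, ?_⟩ ⟨by positivity, ?_⟩ ?_
  · exact inv_anti₀ two_pos (by linarith)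
  · exact inv_anti₀ two_pos (by linarith)
  · exact inv_anti₀ (by positivity) (by linarith)

theorem add_one_rpow_div_rpow_eq_rpow {r : ℝ} (hr : 0 < r) :
    (r + 1) ^ (r + 1) / r ^ r = ((r + 1) / r ^ (r / (r + 1))) ^ (r + 1) := by
  rw [div_rpow (by positivity) (by positivity), ← rpow_mul hr.le, div_mul_cancel₀ _ (by positivity)]

/-- For every integer `k ≥ 7` and real `r > 0`,
`min { (r+1)/r^{r/(r+1)}, ((r+1)^{r+1}/r^r)^{1/(k-4)} } ≤ (k-4)/(k-5)^{(k-5)/(k-4)}`,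
with equality when `r = k - 5`. -/
theorem h3k_sap_optimization (k : ℕ) (hk : 7 ≤ k) :
    ∀ r : ℝ, 0 < r →
      min ((r + 1) / r ^ (r / (r + 1)))
          (((r + 1) ^ (r + 1) / r ^ r) ^ (1 / ((k : ℝ) - 4)))
        ≤ ((k : ℝ) - 4) / ((k : ℝ) - 5) ^ (((k : ℝ) - 5) / ((k : ℝ) - 4)) ∧
      (r = (k : ℝ) - 5 →
        min ((r + 1) / r ^ (r / (r + 1)))
            (((r + 1) ^ (r + 1) / r ^ r) ^ (1 / ((k : ℝ) - 4)))
          = ((k : ℝ) - 4) / ((k : ℝ) - 5) ^ (((k : ℝ) - 5) / ((k : ℝ) - 4))) := by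
  intro r hr
  set c : ℝ := (k : ℝ) - 5
  have hc : 1 ≤ c := by
    have : (7 : ℝ) ≤ k := by exact_mod_cast hk
    linarith
  have hc_pos : 0 < c := by linarith
  rw [show (k : ℝ) - 4 = c + 1 by ring]
  have branches_meet : ((c + 1) ^ (c + 1) / c ^ c) ^ (1 / (c + 1)) = (c + 1) / c ^ (c / (c + 1)) := by
    rw [add_one_rpow_div_rpow_eq_rpow hc_pos, ← rpow_mul (by positivity),
      mul_one_div_cancel (by positivity), rpow_one]
  refine ⟨?_, fun hrc ↦ by rw [hrc, branches_meet, min_self]⟩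
  rcases le_total r c with hrc | hcr
  · calc _ ≤ ((r + 1) ^ (r + 1) / r ^ r) ^ (1 / (c + 1)) := min_le_right _ _
      _ ≤ ((c + 1) ^ (c + 1) / c ^ c) ^ (1 / (c + 1)) :=
        rpow_le_rpow (by positivity) (monotoneOn_add_one_rpow_div_rpow hr hc_pos hrc) (by positivity)
      _ = _ := branches_meet
  · exact (min_le_left _ _).trans (antitoneOn_add_one_div_rpow hc (hc.trans hcr) hcr)
end

section
/- For every real number d ≥ 7, let g_d(λ) = λ^4 + (3−d)λ^3 + (9−2d)λ^2 + (3−d)λ − 2. Then g_d(d−1−7/d) < 0 and g_d(d−1) = 6d^2 − 10d + 2 > 0; consequently there exists a real number λ with d−1−7/d < λ < d−1 and g_d(λ) = 0. -/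
/-!
Clearing denominators, `d⁴ · g_d(d - 1 - 7/d)` is a sextic in `d` with leading term `-d⁶`, and
for `d ≥ 7` the leading terms dominate, so it is negative. Since `g_d(d - 1) = 6d² - 10d + 2 > 0`,
the intermediate value theorem gives a root in between.
-/

def transferQuartic (d x : ℝ) : ℝ :=
  x ^ 4 + (3 - d) * x ^ 3 + (9 - 2 * d) * x ^ 2 + (3 - d) * x - 2

theorem continuous_transferQuartic (d : ℝ) : Continuous (transferQuartic d) := by
  unfold transferQuartic
  fun_prop

theorem transferQuartic_sub_one (d : ℝ) :
    transferQuartic d (d - 1) = 6 * d ^ 2 - 10 * d + 2 := by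
  unfold transferQuartic
  ring

theorem transferQuartic_sub_one_sub_seven_div_mul_pow_four {d : ℝ} (hd : d ≠ 0) :
    transferQuartic d (d - 1 - 7 / d) * d ^ 4 =
      -d ^ 6 - 3 * d ^ 5 + 65 * d ^ 4 - 28 * d ^ 3 - 735 * d ^ 2 + 343 * d + 2401 := by
  unfold transferQuartic
  field_simp
  ring

theorem sextic_neg_of_seven_le {d : ℝ} (hd : 7 ≤ d) :
    -d ^ 6 - 3 * d ^ 5 + 65 * d ^ 4 - 28 * d ^ 3 - 735 * d ^ 2 + 343 * d + 2401 < 0 := by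
  have hd0 : 0 < d := by linarith
  nlinarith [pow_le_pow_left₀ (by norm_num : (0 : ℝ) ≤ 7) hd 6,
    pow_le_pow_left₀ (by norm_num : (0 : ℝ) ≤ 7) hd 4,
    pow_pos hd0 5, pow_pos hd0 3, sq_nonneg d, pow_pos hd0 6]

theorem transferQuartic_sub_one_sub_seven_div_neg {d : ℝ} (hd : 7 ≤ d) :
    transferQuartic d (d - 1 - 7 / d) < 0 := by
  have hd0 : 0 < d := by linarith
  have hprod := transferQuartic_sub_one_sub_seven_div_mul_pow_four hd0.ne'
  exact neg_of_mul_neg_left (hprod ▸ sextic_neg_of_seven_le hd) (pow_pos hd0 4).le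

/-- For every real `d ≥ 7`, the quartic
`g_d(λ) = λ^4 + (3-d)λ^3 + (9-2d)λ^2 + (3-d)λ - 2` satisfies `g_d(d-1-7/d) < 0`,
`g_d(d-1) = 6d^2 - 10d + 2 > 0`, and hence has a real root in `(d-1-7/d, d-1)`. -/
theorem transfer_charpoly_root (d : ℝ) (hd : 7 ≤ d)
    (g : ℝ → ℝ)
    (hg : ∀ x : ℝ, g x = x ^ 4 + (3 - d) * x ^ 3 + (9 - 2 * d) * x ^ 2 + (3 - d) * x - 2) :
    g (d - 1 - 7 / d) < 0 ∧
    g (d - 1) = 6 * d ^ 2 - 10 * d + 2 ∧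
    0 < 6 * d ^ 2 - 10 * d + 2 ∧
    ∃ lam : ℝ, d - 1 - 7 / d < lam ∧ lam < d - 1 ∧ g lam = 0 := by
  obtain rfl : g = transferQuartic d := funext hg
  have hlower := transferQuartic_sub_one_sub_seven_div_neg hd
  have hupper := transferQuartic_sub_one d
  have hpos : 0 < 6 * d ^ 2 - 10 * d + 2 := by nlinarith
  have hle : d - 1 - 7 / d ≤ d - 1 := by
    have : 0 < 7 / d := by positivity
    linarith
  obtain ⟨lam, ⟨hlam_gt, hlam_lt⟩, hroot⟩ :=
    intermediate_value_Ioo hle (continuous_transferQuartic d).continuousOn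
      ⟨hlower, hupper ▸ hpos⟩
  exact ⟨hlower, hupper, hpos, lam, hlam_gt, hlam_lt, hroot⟩
end

section
/- For every real number d, the characteristic polynomial of the real 4×4 matrix [[2, d−6, 0, 2], [2, d−5, 2, 0], [2, d−6, 0, 1], [2, d−5, 1, 0]] equals X^4 + (3−d)X^3 + (9−2d)X^2 + (3−d)X − 2. -/
open Polynomial

theorem Matrix.det_fin_four {R : Type*} [CommRing R] (A : Matrix (Fin 4) (Fin 4) R) :
    A.det =
      A 0 0 * (A 1 1 * A 2 2 * A 3 3 - A 1 1 * A 2 3 * A 3 2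
        - A 1 2 * A 2 1 * A 3 3 + A 1 2 * A 2 3 * A 3 1
        + A 1 3 * A 2 1 * A 3 2 - A 1 3 * A 2 2 * A 3 1)
      - A 0 1 * (A 1 0 * A 2 2 * A 3 3 - A 1 0 * A 2 3 * A 3 2
        - A 1 2 * A 2 0 * A 3 3 + A 1 2 * A 2 3 * A 3 0
        + A 1 3 * A 2 0 * A 3 2 - A 1 3 * A 2 2 * A 3 0)
      + A 0 2 * (A 1 0 * A 2 1 * A 3 3 - A 1 0 * A 2 3 * A 3 1
        - A 1 1 * A 2 0 * A 3 3 + A 1 1 * A 2 3 * A 3 0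
        + A 1 3 * A 2 0 * A 3 1 - A 1 3 * A 2 1 * A 3 0)
      - A 0 3 * (A 1 0 * A 2 1 * A 3 2 - A 1 0 * A 2 2 * A 3 1
        - A 1 1 * A 2 0 * A 3 2 + A 1 1 * A 2 2 * A 3 0
        + A 1 2 * A 2 0 * A 3 1 - A 1 2 * A 2 1 * A 3 0) := by
  rw [Matrix.det_succ_row_zero, Fin.sum_univ_four]
  simp only [Matrix.det_fin_three, Matrix.submatrix_apply, Fin.succAbove, Fin.lt_def, Fin.isValue,
    Fin.coe_ofNat_eq_mod, Nat.reduceMod, Nat.reduceLT, if_true, if_false, Fin.reduceSucc,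
    Fin.reduceCastSucc, Nat.succ_eq_add_one, Nat.reduceAdd]
  ring

/-- For every real `d`, the characteristic polynomial of the transfer matrix
`[[2, d-6, 0, 2], [2, d-5, 2, 0], [2, d-6, 0, 1], [2, d-5, 1, 0]]` equals
`X^4 + (3-d)X^3 + (9-2d)X^2 + (3-d)X - 2`. -/
theorem transfer_matrix_charpoly (d : ℝ) :
    Matrix.charpoly
        (!![2, d - 6, 0, 2;
            2, d - 5, 2, 0;
            2, d - 6, 0, 1;
            2, d - 5, 1, 0] : Matrix (Fin 4) (Fin 4) ℝ)
      = X ^ 4 + C (3 - d) * X ^ 3 + C (9 - 2 * d) * X ^ 2 + C (3 - d) * X - 2 := by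
  rw [Matrix.charpoly, Matrix.det_fin_four]
  simp only [Matrix.charmatrix_apply, Matrix.diagonal_apply, Matrix.of_apply, Matrix.cons_val',
    Matrix.cons_val_zero, Matrix.cons_val_one, Matrix.cons_val, Matrix.cons_val_fin_one, Fin.isValue,
    Fin.reduceEq, if_true, if_false, map_zero, map_one, map_sub, map_mul, C_ofNat]
  ring
end
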